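/- Let s and t be closed terms over Kleene's first model K_1. Then s ≈ t (i.e., s ∼_α t for some ordinal α) if and only if for every infinite sequence a_0, a_1, a_2, … of elements of K_1 there is an n such that s·a_0·a_1·…·a_n ≃ t·a_0·a_1·…·a_n. Equivalently, s ≈ t iff the tree T = {σ ∈ ω^{<ω} : s·σ ≄ t·σ} is well-founded. -/

import Mathlib

/-- A partial applicative structure: a set with a partial binary application. -/
structure PAS where
  carrier : Type
  app : carrier → carrier → Part carrier

namespace PAS

/-- Closed terms over a partial applicative structure. -/
inductive Term (A : PAS) : Type
  | const : A.carrier → Term A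
  | app : Term A → Term A → Term A

/-- Evaluation of a closed term (a partial element of the carrier). -/
def Term.eval {A : PAS} : Term A → Part A.carrier
  | .const a => Part.some a
  | .app s t => do
      let x ← Term.eval s
      let y ← Term.eval t
      A.app x y

/-- Kleene equality of closed terms: both undefined, or both defined and equal. -/
def KEq {A : PAS} (s t : Term A) : Prop := s.eval = t.eval

/-- The transfinite hierarchy of extensionality relations `∼_α` on closed terms:
`s ∼_0 t` iff `s ≃ t`; `s ∼_{α+1} t` iff `∀ x, s·x ∼_α t·x`; and at limits,
`s ∼_α t` iff `s ∼_β t` for some `β < α`. -/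
noncomputable def sim (A : PAS) (α : Ordinal) : Term A → Term A → Prop :=
  Ordinal.limitRecOn α
    (fun s t => KEq s t)
    (fun _ ih s t => ∀ x : A.carrier, ih (s.app (.const x)) (t.app (.const x)))
    (fun β _ ih s t => ∃ γ, ∃ h : γ < β, ih γ h s t)

end PAS

/-- A partial combinatory algebra: a partial applicative structure with
combinators `K` and `S` such that `K·a·b = a`, `S·a·b` is defined, and
`S·a·b·c ≃ a·c·(b·c)`. -/
structure PCA extends PAS where
  K : carrier
  S : carrier
  K_spec : ∀ a b : carrier, (app K a).bind (fun x => app x b) = Part.some a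
  S_defined : ∀ a b : carrier, ((app S a).bind (fun x => app x b)).Dom
  S_spec : ∀ a b c : carrier,
    ((app S a).bind (fun x => app x b)).bind (fun x => app x c)
      = (app a c).bind (fun u => (app b c).bind (fun v => app u v))

/-- Kleene's first model: the pca on ω with application n·m = Φ_n(m). -/
def K1 : PAS :=
  ⟨ℕ, fun n m => (Denumerable.ofNat Nat.Partrec.Code n).eval m⟩

/-- Iterated application of a term to a finite list of elements: t·σ(0)·…·σ(k-1). -/
def PAS.Term.appList {A : PAS} (t : PAS.Term A) (σ : List A.carrier) : PAS.Term A :=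
  σ.foldl (fun s x => s.app (.const x)) t

/-- An element is hereditarily total if every iterated application to elements is defined. -/
def PAS.HeredTotal (A : PAS) (a : A.carrier) : Prop :=
  ∀ σ : List A.carrier, ((PAS.Term.const a).appList σ).eval.Dom

/-- A set of strings (tree) is well-founded iff the proper-extension relation on it
is well-founded, i.e. it has no infinite path. -/
def TreeWellFounded (T : List ℕ → Prop) : Prop :=
  WellFounded (fun τ σ : {l : List ℕ // T l} => σ.1 <+: τ.1 ∧ σ.1 ≠ τ.1)

/-! A string `σ` lies in the tree `T` of `s` and `t` exactly when `s·σ ≄ t·σ`, and the complement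
of `T` is closed under extension. If `s ∼_α t`, induction on `α` shows that every infinite
sequence has a finite initial segment outside `T`, so `T` has no infinite branch. Conversely, if
`T` is well-founded, induction along `T` shows `s·σ ≈ t·σ` for every `σ ∈ T`: each one-step
extension of `σ` is either outside `T` or covered by the induction hypothesis, and `≈` is closed
under the ω-rule `(∀ x, s·x ≈ t·x) → s ≈ t` because countably many ordinals have a supremum. -/

universe u

namespace PAS

variable {A : PAS}

theorem KEq.app {s t : A.Term} (h : KEq s t) (x : A.carrier) :
    KEq (s.app (.const x)) (t.app (.const x)) := by
  simp only [KEq, Term.eval] at h ⊢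
  rw [h]

theorem KEq.appList {s t : A.Term} (h : KEq s t) (σ : List A.carrier) :
    KEq (s.appList σ) (t.appList σ) := by
  induction σ generalizing s t with
  | nil => exact h
  | cons x σ ih => exact ih (h.app x)

theorem Term.appList_append (t : A.Term) (σ τ : List A.carrier) :
    t.appList (σ ++ τ) = (t.appList σ).appList τ :=
  List.foldl_append ..

theorem Term.appList_concat (t : A.Term) (σ : List A.carrier) (x : A.carrier) :
    t.appList (σ ++ [x]) = (t.appList σ).app (.const x) :=
  t.appList_append σ [x]

theorem KEq.appList_append {s t : A.Term} {σ : List A.carrier}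
    (h : KEq (s.appList σ) (t.appList σ)) (τ : List A.carrier) :
    KEq (s.appList (σ ++ τ)) (t.appList (σ ++ τ)) := by
  rw [Term.appList_append, Term.appList_append]
  exact h.appList τ

theorem sim_zero {s t : A.Term} : A.sim 0 s t ↔ KEq s t := by
  rw [sim, Ordinal.limitRecOn_zero]

theorem sim_add_one {α : Ordinal} {s t : A.Term} :
    A.sim (α + 1) s t ↔ ∀ x, A.sim α (s.app (.const x)) (t.app (.const x)) := by
  rw [sim, Ordinal.limitRecOn_add_one]
  rfl

theorem sim_of_isSuccLimit {α : Ordinal} (hα : Order.IsSuccLimit α) {s t : A.Term} :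
    A.sim α s t ↔ ∃ β < α, A.sim β s t := by
  rw [sim, Ordinal.limitRecOn_limit _ _ _ _ hα]
  simp only [exists_prop]
  rfl

theorem sim.app {α : Ordinal} {s t : A.Term} (h : A.sim α s t) (x : A.carrier) :
    A.sim α (s.app (.const x)) (t.app (.const x)) := by
  induction α using Ordinal.limitRecOn generalizing s t x with
  | zero => exact sim_zero.2 ((sim_zero.1 h).app x)
  | add_one α ih =>
    rw [sim_add_one] at h ⊢
    exact fun y => ih (h x) y
  | limit α hα ih =>
    obtain ⟨β, hβ, h⟩ := (sim_of_isSuccLimit hα).1 h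
    exact (sim_of_isSuccLimit hα).2 ⟨β, hβ, ih β hβ h x⟩

theorem sim_mono {α β : Ordinal} (hαβ : α ≤ β) {s t : A.Term} (h : A.sim α s t) :
    A.sim β s t := by
  induction β using Ordinal.limitRecOn with
  | zero => rwa [nonpos_iff_eq_zero.1 hαβ] at h
  | add_one β ih =>
    rcases hαβ.lt_or_eq with hlt | rfl
    · exact sim_add_one.2 fun x => (ih (Order.lt_add_one_iff.1 hlt)).app x
    · exact h
  | limit β hβ ih =>
    rcases hαβ.lt_or_eq with hlt | rfl
    · exact (sim_of_isSuccLimit hβ).2 ⟨α, hlt, h⟩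
    · exact h

theorem exists_sim_of_forall_app {s t : A.Term}
    (h : ∀ x, ∃ α : Ordinal.{u}, A.sim α (s.app (.const x)) (t.app (.const x))) :
    ∃ α : Ordinal.{u}, A.sim α s t := by
  choose α hα using h
  exact ⟨(⨆ x, α x) + 1,
    sim_add_one.2 fun x => sim_mono (le_ciSup Ordinal.bddAbove_of_small x) (hα x)⟩

theorem sim.exists_keq_ofFn {α : Ordinal} {s t : A.Term} (h : A.sim α s t) (a : ℕ → A.carrier) :
    ∃ n : ℕ, KEq (s.appList (List.ofFn fun i : Fin (n + 1) => a i))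
      (t.appList (List.ofFn fun i : Fin (n + 1) => a i)) := by
  induction α using Ordinal.limitRecOn generalizing s t a with
  | zero => exact ⟨0, (sim_zero.1 h).appList _⟩
  | add_one α ih =>
    rw [sim_add_one] at h
    obtain ⟨n, hn⟩ := ih (h (a 0)) fun i => a (i + 1)
    refine ⟨n + 1, ?_⟩
    rw [List.ofFn_succ]
    exact hn
  | limit α hα ih =>
    obtain ⟨β, hβ, h⟩ := (sim_of_isSuccLimit hα).1 h
    exact ih β hβ h a

theorem exists_sim_appList_of_wellFounded {s t : A.Term}
    (hwf : WellFounded fun τ σ : {σ : List A.carrier // ¬ KEq (s.appList σ) (t.appList σ)} =>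
      σ.1 <+: τ.1 ∧ σ.1 ≠ τ.1)
    (σ : List A.carrier) : ∃ α : Ordinal.{u}, A.sim α (s.appList σ) (t.appList σ) := by
  by_cases hσ : KEq (s.appList σ) (t.appList σ)
  · exact ⟨0, sim_zero.2 hσ⟩
  refine hwf.induction (C := fun p => ∃ α : Ordinal.{u}, A.sim α (s.appList p.1) (t.appList p.1))
    ⟨σ, hσ⟩ fun p ih => exists_sim_of_forall_app fun x => ?_
  rw [← Term.appList_concat, ← Term.appList_concat]
  by_cases hx : KEq (s.appList (p.1 ++ [x])) (t.appList (p.1 ++ [x]))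
  · exact ⟨0, sim_zero.2 hx⟩
  · exact ih ⟨_, hx⟩ ⟨List.prefix_append _ _, by simp⟩

end PAS

open PAS

theorem List.exists_forall_ofFn_prefix {α : Type*} [Inhabited α] {σ : ℕ → List α}
    (hσ : ∀ n, σ n <+: σ (n + 1) ∧ σ n ≠ σ (n + 1)) :
    ∃ a : ℕ → α, ∀ n, (List.ofFn fun i : Fin n => a i) <+: σ n := by
  have hlen : ∀ n, n ≤ (σ n).length := by
    intro n
    induction n with
    | zero => exact Nat.zero_le _
    | succ n ih =>
      have := lt_of_le_of_ne (hσ n).1.length_le fun h => (hσ n).2 ((hσ n).1.eq_of_length h)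
      omega
  have hmono : ∀ {m n}, m ≤ n → σ m <+: σ n := by
    intro m n hmn
    induction n, hmn using Nat.le_induction with
    | base => exact List.prefix_refl _
    | succ n _ ih => exact ih.trans (hσ n).1
  refine ⟨fun i => (σ (i + 1)).getD i default, fun n => List.prefix_iff_getElem.2 ⟨?_, ?_⟩⟩
  · simpa using hlen n
  · intro i hi
    rw [List.length_ofFn] at hi
    have hi' : i < (σ (i + 1)).length := hlen (i + 1)
    simp only [List.getElem_ofFn, List.getD_eq_getElem _ _ hi']
    exact (hmono hi).getElem hi'

theorem treeWellFounded_not_of_forall_exists {U : List ℕ → Prop}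
    (hU : ∀ σ τ, U σ → U (σ ++ τ))
    (h : ∀ a : ℕ → ℕ, ∃ n, U (List.ofFn fun i : Fin (n + 1) => a i)) :
    TreeWellFounded fun σ => ¬ U σ := by
  refine wellFounded_iff_isEmpty_descending_chain.2 ⟨fun ⟨σ, hσ⟩ => ?_⟩
  obtain ⟨a, ha⟩ := List.exists_forall_ofFn_prefix (σ := fun n => (σ n).1) hσ
  obtain ⟨n, hn⟩ := h a
  obtain ⟨τ, hτ⟩ := ha (n + 1)
  exact (σ (n + 1)).2 (hτ ▸ hU _ τ hn)

theorem exists_sim_of_treeWellFounded {s t : K1.Term}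
    (hwf : TreeWellFounded fun σ => ¬ KEq (s.appList σ) (t.appList σ)) :
    ∃ α : Ordinal.{u}, K1.sim α s t :=
  exists_sim_appList_of_wellFounded (s := s) (t := t) hwf []

/-- For closed terms s, t over K₁: s ≈ t iff for every infinite sequence
a₀, a₁, … there is an n with s·a₀·…·aₙ ≃ t·a₀·…·aₙ; equivalently, iff the tree
T = {σ : s·σ ≄ t·σ} is well-founded. -/
theorem stmt9 (s t : K1.Term) :
    ((∃ α : Ordinal, K1.sim α s t) ↔
      ∀ a : ℕ → ℕ, ∃ n : ℕ,
        PAS.KEq (s.appList (List.ofFn fun i : Fin (n + 1) => a i))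
                (t.appList (List.ofFn fun i : Fin (n + 1) => a i))) ∧
    ((∃ α : Ordinal, K1.sim α s t) ↔
      TreeWellFounded (fun σ => ¬ PAS.KEq (s.appList σ) (t.appList σ))) := by
  have path_wf := treeWellFounded_not_of_forall_exists
    (U := fun σ => KEq (s.appList σ) (t.appList σ)) fun _ τ h => h.appList_append τ
  exact ⟨⟨fun ⟨_, h⟩ => h.exists_keq_ofFn, fun h => exists_sim_of_treeWellFounded (path_wf h)⟩,
    ⟨fun ⟨_, h⟩ => path_wf h.exists_keq_ofFn, exists_sim_of_treeWellFounded⟩⟩
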